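/- arXiv:1801.08507 — 3 statements merged into one kernel-verified Lean document; each statement's English description precedes it below -/
import Mathlib

section
/- Let $A \subseteq \mathbb{F}_2^n$ and let $f = \sum_{a \in A} y_a W_a$ with $\sum_{a\in A} y_a^2 = 1$. Let $m(A) = 1 + \max_{x \ne 0} |M_x|$, where $M_x = \{(a,b) \in A \times A : a+b = x\}$. Then $\mathbb{E} f^4 \le m(A)$. -/
/-!
Write `f = ∑_{a ∈ A} y_a W_a`. Since `W_a W_b = W_{a+b}`, `f² = ∑_s g_s W_s` with
`g_s = ∑_{(a,b) ∈ M_s} y_a y_b`, so Parseval gives `𝔼 f⁴ = ∑_s g_s²`. In characteristic two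
`a + b = 0` forces `a = b`, hence `g_0 = ∑ y_a² = 1`. For `s ≠ 0`, Cauchy–Schwarz gives
`g_s² ≤ |M_s| ∑_{(a,b) ∈ M_s} y_a² y_b²`, and these fibre sums add up to `(∑ y_a²)² = 1`.
-/

open Finset

/-- The Walsh-Fourier character `W_a(x) = (-1)^⟨a,x⟩` on `{0,1}^n ≅ 𝔽₂ⁿ`. -/
def walsh {n : ℕ} (a x : Fin n → ZMod 2) : ℝ := (-1 : ℝ) ^ (∑ i, (a i * x i).val)

/-- `|M_x| = |{(a,b) ∈ A × A : a + b = x}|`. -/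
def Mcard {n : ℕ} (A : Finset (Fin n → ZMod 2)) (x : Fin n → ZMod 2) : ℕ :=
  ((A ×ˢ A).filter (fun p => p.1 + p.2 = x)).card

/-- `m(A) = 1 + max_{x ≠ 0} |M_x|`. -/
def mOf {n : ℕ} (A : Finset (Fin n → ZMod 2)) : ℕ :=
  1 + (Finset.univ.erase (0 : Fin n → ZMod 2)).sup (fun x => Mcard A x)

lemma pi_add_eq_zero_iff_eq {ι R : Type*} [Ring R] [CharP R 2] {s t : ι → R} :
    s + t = 0 ↔ s = t := by
  simp only [funext_iff, Pi.add_apply, Pi.zero_apply, CharTwo.add_eq_zero]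

lemma neg_one_pow_val_add (u v : ZMod 2) :
    (-1 : ℝ) ^ (u + v).val = (-1) ^ u.val * (-1) ^ v.val := by
  rw [ZMod.val_add, ← neg_one_pow_eq_pow_mod_two, pow_add]

lemma sum_neg_one_pow_val_mul (u : ZMod 2) :
    ∑ t : ZMod 2, (-1 : ℝ) ^ (u * t).val = if u = 0 then 2 else 0 := by
  obtain rfl | rfl : u = 0 ∨ u = 1 := by revert u; decide
  · simp
  · simp only [one_mul, one_ne_zero, if_false]
    exact (Fin.sum_univ_two (fun t : ZMod 2 => (-1 : ℝ) ^ t.val)).trans (by norm_num [ZMod.val])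

section SelfConvolution

variable {G : Type*} [Add G] [DecidableEq G]

/-- `selfConv A y s = ∑_{(a,b) ∈ M_s} y_a y_b`, the Walsh coefficient of `f²` at `s`. -/
def selfConv (A : Finset G) (y : G → ℝ) (s : G) : ℝ :=
  ∑ p ∈ (A ×ˢ A).filter (fun p => p.1 + p.2 = s), y p.1 * y p.2

lemma sum_sum_fiber_sq [Fintype G] (A : Finset G) (y : G → ℝ) :
    ∑ s, ∑ p ∈ (A ×ˢ A).filter (fun p => p.1 + p.2 = s), (y p.1 * y p.2) ^ 2
      = (∑ a ∈ A, y a ^ 2) ^ 2 := by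
  rw [sum_fiberwise, sum_product, sq, sum_mul_sum]
  simp only [mul_pow]

end SelfConvolution

section Walsh

variable {n : ℕ}

lemma walsh_eq_prod (a x : Fin n → ZMod 2) : walsh a x = ∏ i, (-1 : ℝ) ^ (a i * x i).val := by
  rw [walsh, prod_pow_eq_pow_sum]

lemma walsh_mul_walsh (a b x : Fin n → ZMod 2) : walsh a x * walsh b x = walsh (a + b) x := by
  simp only [walsh_eq_prod, ← prod_mul_distrib, Pi.add_apply, add_mul, neg_one_pow_val_add]

lemma sum_walsh (c : Fin n → ZMod 2) : ∑ x, walsh c x = if c = 0 then 2 ^ n else 0 := by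
  simp only [walsh_eq_prod]
  rw [← Fintype.prod_sum (fun i (t : ZMod 2) => (-1 : ℝ) ^ (c i * t).val)]
  simp only [sum_neg_one_pow_val_mul]
  split_ifs with hc
  · simp [hc]
  · obtain ⟨i, hi⟩ := Function.ne_iff.mp hc
    exact prod_eq_zero (mem_univ i) (if_neg hi)

lemma sum_walsh_mul_walsh (s t : Fin n → ZMod 2) :
    ∑ x, walsh s x * walsh t x = if s = t then 2 ^ n else 0 := by
  simp only [walsh_mul_walsh, sum_walsh, pi_add_eq_zero_iff_eq]

lemma sum_sq_sum_mul_walsh (g : (Fin n → ZMod 2) → ℝ) :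
    ∑ x, (∑ s, g s * walsh s x) ^ 2 = 2 ^ n * ∑ s, g s ^ 2 := by
  calc ∑ x, (∑ s, g s * walsh s x) ^ 2
      = ∑ s, ∑ t, ∑ x, g s * g t * (walsh s x * walsh t x) := by
        simp_rw [sq, sum_mul_sum, mul_mul_mul_comm]
        rw [sum_comm]
        exact sum_congr rfl fun s _ => sum_comm
    _ = 2 ^ n * ∑ s, g s ^ 2 := by
        simp only [← mul_sum, sum_walsh_mul_walsh, mul_ite, mul_zero, sum_ite_eq, mem_univ, if_true]
        rw [mul_sum]
        exact sum_congr rfl fun s _ => by ring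

variable (A : Finset (Fin n → ZMod 2)) (y : (Fin n → ZMod 2) → ℝ)

lemma sq_sum_mul_walsh (x : Fin n → ZMod 2) :
    (∑ a ∈ A, y a * walsh a x) ^ 2 = ∑ s, selfConv A y s * walsh s x := by
  have hcoeff : ∀ s, selfConv A y s * walsh s x
      = ∑ p ∈ (A ×ˢ A).filter (fun p => p.1 + p.2 = s),
          y p.1 * walsh p.1 x * (y p.2 * walsh p.2 x) := by
    intro s
    rw [selfConv, sum_mul]
    refine sum_congr rfl fun p hp => ?_
    rw [← (mem_filter.mp hp).2, ← walsh_mul_walsh]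
    ring
  simp only [hcoeff, sum_fiberwise, sq, sum_mul_sum, sum_product]

lemma selfConv_zero : selfConv A y 0 = ∑ a ∈ A, y a ^ 2 := by
  simp only [selfConv, pi_add_eq_zero_iff_eq, sum_filter, sum_product, sum_ite_eq, sq]
  exact sum_congr rfl fun a ha => if_pos ha

lemma selfConv_sq_le (s : Fin n → ZMod 2) :
    selfConv A y s ^ 2
      ≤ Mcard A s * ∑ p ∈ (A ×ˢ A).filter (fun p => p.1 + p.2 = s), (y p.1 * y p.2) ^ 2 := by
  rw [selfConv, Mcard]
  exact_mod_cast sq_sum_le_card_mul_sum_sq (f := fun p : (Fin n → ZMod 2) × _ => y p.1 * y p.2)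

lemma sum_sq_selfConv_le : ∑ s, selfConv A y s ^ 2 ≤ mOf A * (∑ a ∈ A, y a ^ 2) ^ 2 := by
  set M := (univ.erase (0 : Fin n → ZMod 2)).sup (Mcard A)
  set T := fun s => ∑ p ∈ (A ×ˢ A).filter (fun p => p.1 + p.2 = s), (y p.1 * y p.2) ^ 2
  have hT : ∀ s, 0 ≤ T s := fun s => sum_nonneg fun p _ => sq_nonneg _
  calc ∑ s, selfConv A y s ^ 2
      = selfConv A y 0 ^ 2 + ∑ s ∈ univ.erase 0, selfConv A y s ^ 2 :=
        (add_sum_erase _ _ (mem_univ _)).symm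
    _ ≤ (∑ a ∈ A, y a ^ 2) ^ 2 + ∑ s ∈ univ.erase 0, (M : ℝ) * T s := by
        rw [selfConv_zero]
        gcongr with s hs
        refine (selfConv_sq_le A y s).trans (mul_le_mul_of_nonneg_right ?_ (hT s))
        exact_mod_cast le_sup (f := Mcard A) hs
    _ ≤ (∑ a ∈ A, y a ^ 2) ^ 2 + M * (∑ a ∈ A, y a ^ 2) ^ 2 := by
        rw [← mul_sum, ← sum_sum_fiber_sq]
        gcongr
        exact erase_subset _ _
    _ = mOf A * (∑ a ∈ A, y a ^ 2) ^ 2 := by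
        rw [mOf]; push_cast; ring

end Walsh

theorem stmt_2 (n : ℕ) (A : Finset (Fin n → ZMod 2)) (y : (Fin n → ZMod 2) → ℝ)
    (hy : ∑ a ∈ A, (y a) ^ 2 = 1) :
    (∑ x, (∑ a ∈ A, y a * walsh a x) ^ 4) / 2 ^ n ≤ (mOf A : ℝ) := by
  have hfourth : ∀ x, (∑ a ∈ A, y a * walsh a x) ^ 4 = (∑ s, selfConv A y s * walsh s x) ^ 2 :=
    fun x => by rw [← sq_sum_mul_walsh]; ring
  calc (∑ x, (∑ a ∈ A, y a * walsh a x) ^ 4) / 2 ^ n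
      = ∑ s, selfConv A y s ^ 2 := by
        rw [sum_congr rfl fun x _ => hfourth x, sum_sq_sum_mul_walsh]
        field_simp
    _ ≤ mOf A * (∑ a ∈ A, y a ^ 2) ^ 2 := sum_sq_selfConv_le A y
    _ = mOf A := by rw [hy, one_pow, mul_one]
end

section
/- For $0 \le t \le k \le n/2$ and $n \ge 1$, define $s_t(n,k) = \binom{n}{k}^{-2} \binom{n}{2t} \left(\binom{2t}{t}\binom{n-2t}{k-t}\right)^2$. Then for all $0 \le t \le k-1$, $s_t(n, k-1) \le s_t(n, k)$; consequently $r(n,k-1) \le r(n,k)$ where $r(n,k) = \sum_{t=0}^k s_t(n,k)$. -/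
open Finset

/-- `s_t(n,k) = binom(n,k)⁻² ⬝ binom(n,2t) ⬝ (binom(2t,t) binom(n-2t,k-t))²`. -/
noncomputable def s (n k t : ℕ) : ℝ :=
  ((n.choose (2 * t) * ((2 * t).choose t * (n - 2 * t).choose (k - t)) ^ 2 : ℕ) : ℝ) /
    ((n.choose k : ℝ)) ^ 2

/- Both ratios `C(n,j+1)/C(n,j) = (n-j)/(j+1)` and
`C(n-2t,j+1-t)/C(n-2t,j-t) = (n-j-t)/(j+1-t)` come from `Nat.choose_succ_right_eq`, and
`(n-j)/(j+1) ≤ (n-j-t)/(j+1-t)` is equivalent to `j+1 ≤ n-j` once `t > 0`. -/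
theorem choose_sub_mul_choose_succ_le {n j t : ℕ} (htj : t ≤ j) (hjn : 2 * j + 1 ≤ n) :
    (n - 2 * t).choose (j - t) * n.choose (j + 1) ≤
      (n - 2 * t).choose (j + 1 - t) * n.choose j := by
  obtain ⟨i, rfl⟩ := Nat.exists_eq_add_of_le htj
  obtain ⟨c, rfl⟩ : ∃ c, n = 2 * t + 2 * i + 1 + c := ⟨n - (2 * t + 2 * i + 1), by omega⟩
  have hn : 2 * t + 2 * i + 1 + c - 2 * t = 2 * i + 1 + c := by omega
  have hi : t + i + 1 - t = i + 1 := by omega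
  simp only [hn, hi, Nat.add_sub_cancel_left]
  have hbig := Nat.choose_succ_right_eq (2 * t + 2 * i + 1 + c) (t + i)
  have hsmall := Nat.choose_succ_right_eq (2 * i + 1 + c) i
  rw [show 2 * t + 2 * i + 1 + c - (t + i) = t + i + 1 + c by omega] at hbig
  rw [show 2 * i + 1 + c - i = i + 1 + c by omega] at hsmall
  set A := (2 * i + 1 + c).choose i
  set B := (2 * i + 1 + c).choose (i + 1)
  set P := (2 * t + 2 * i + 1 + c).choose (t + i)
  set Q := (2 * t + 2 * i + 1 + c).choose (t + i + 1)
  refine Nat.le_of_mul_le_mul_right (c := (t + i + 1) * (i + 1)) ?_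
    (Nat.mul_pos (Nat.succ_pos _) (Nat.succ_pos _))
  calc A * Q * ((t + i + 1) * (i + 1))
      = A * P * ((t + i + 1 + c) * (i + 1)) := by linear_combination (A * (i + 1)) * hbig
    _ ≤ A * P * ((i + 1 + c) * (t + i + 1)) := Nat.mul_le_mul_left _ (by nlinarith)
    _ = B * P * ((t + i + 1) * (i + 1)) := by linear_combination (P * (t + i + 1)) * hsmall.symm

theorem s_eq (n k t : ℕ) :
    s n k t = (n.choose (2 * t) * (2 * t).choose t ^ 2 : ℝ) *
      ((n - 2 * t).choose (k - t) / n.choose k : ℝ) ^ 2 := by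
  unfold s
  push_cast
  ring

theorem s_nonneg (n k t : ℕ) : 0 ≤ s n k t := by
  unfold s
  positivity

theorem s_le_s_succ {n j t : ℕ} (htj : t ≤ j) (hjn : 2 * j + 1 ≤ n) :
    s n j t ≤ s n (j + 1) t := by
  have hratio : ((n - 2 * t).choose (j - t) / n.choose j : ℝ) ≤
      (n - 2 * t).choose (j + 1 - t) / n.choose (j + 1) := by
    rw [div_le_div_iff₀ (mod_cast Nat.choose_pos (by omega)) (mod_cast Nat.choose_pos (by omega))]
    exact_mod_cast choose_sub_mul_choose_succ_le htj hjn
  rw [s_eq, s_eq]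
  gcongr

theorem stmt_9_general (n k : ℕ) (hk : 1 ≤ k) (hkn : 2 * k ≤ n) :
    (∀ t, t ≤ k - 1 → s n (k - 1) t ≤ s n k t) ∧
      (∑ t ∈ Finset.range k, s n (k - 1) t) ≤ (∑ t ∈ Finset.range (k + 1), s n k t) := by
  obtain ⟨j, rfl⟩ := Nat.exists_eq_add_of_le' hk
  rw [Nat.add_sub_cancel]
  have hmono : ∀ t, t ≤ j → s n j t ≤ s n (j + 1) t := fun t ht => s_le_s_succ ht (by omega)
  refine ⟨hmono, ?_⟩
  calc ∑ t ∈ range (j + 1), s n j t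
      ≤ ∑ t ∈ range (j + 1), s n (j + 1) t :=
        sum_le_sum fun t ht => hmono t (Nat.lt_succ_iff.mp (mem_range.mp ht))
    _ ≤ ∑ t ∈ range (j + 1 + 1), s n (j + 1) t :=
        sum_le_sum_of_subset_of_nonneg (range_subset_range.mpr (by omega))
          fun t _ _ => s_nonneg n (j + 1) t

theorem stmt_9 (n k : ℕ) (hn : 1 ≤ n) (hk : 1 ≤ k) (hkn : 2 * k ≤ n) :
    (∀ t, t ≤ k - 1 → s n (k - 1) t ≤ s n k t) ∧
      (∑ t ∈ Finset.range k, s n (k - 1) t) ≤ (∑ t ∈ Finset.range (k + 1), s n k t) :=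
  stmt_9_general n k hk hkn
end

section
/- Let $a_0, a_1, b_0, b_1 > 0$ with $R_0 = a_0/b_0^2$ and $R_1 = a_1/b_1^2$ satisfying $R_1/9 < R_0 < 9R_1$. Then the supremum over $x \ge 0$ of $G(x) = \frac{a_1 x^2 + 6\sqrt{a_0 a_1}\, x + a_0}{b_1^2 x^2 + 2 b_0 b_1 x + b_0^2}$ equals $F(R_0, R_1) = \frac{8 R_0 R_1}{4\sqrt{R_0 R_1} - (\sqrt{R_0}-\sqrt{R_1})^2}$, attained at $x = \frac{\sqrt{a_0}}{\sqrt{a_1}} \cdot \frac{3\sqrt{R_1} - \sqrt{R_0}}{3\sqrt{R_0} - \sqrt{R_1}}$. -/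
/-!
Writing `R₀ = p²`, `R₁ = q²`, `a₀ = (p b₀)²`, `a₁ = (q b₁)²` and `u = b₁ x`, `v = b₀`, the quotient
`G x` becomes `(q²u² + 6pquv + p²v²) / (u + v)²` and `F R₀ R₁ = 8p²q² / (6pq - p² - q²)`.
Everything then follows from the polynomial identity
`8p²q²(u + v)² - (q²u² + 6pquv + p²v²)(6pq - p² - q²) = (q(3p - q)u - p(3q - p)v)²`,
where `6pq - p² - q² > 0` is exactly the hypothesis `R₁/9 < R₀ < 9R₁`.
-/

/-- `F(x,y) = 8xy / (4√(xy) - (√x - √y)²)`. -/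
noncomputable def F (x y : ℝ) : ℝ :=
  8 * x * y / (4 * Real.sqrt (x * y) - (Real.sqrt x - Real.sqrt y) ^ 2)

lemma F_sq_sq {p q : ℝ} (hp : 0 ≤ p) (hq : 0 ≤ q) :
    F (p ^ 2) (q ^ 2) = 8 * p ^ 2 * q ^ 2 / (6 * p * q - p ^ 2 - q ^ 2) := by
  rw [F, ← mul_pow, Real.sqrt_sq (mul_nonneg hp hq), Real.sqrt_sq hp, Real.sqrt_sq hq]
  congr 1
  ring

section QuadraticRatio

variable {p q u v : ℝ}

lemma quad_div_sq_add_le (hpq : 0 < 6 * p * q - p ^ 2 - q ^ 2) (huv : u + v ≠ 0) :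
    (q ^ 2 * u ^ 2 + 6 * p * q * u * v + p ^ 2 * v ^ 2) / (u + v) ^ 2 ≤
      8 * p ^ 2 * q ^ 2 / (6 * p * q - p ^ 2 - q ^ 2) := by
  rw [div_le_div_iff₀ (sq_pos_of_ne_zero huv) hpq]
  nlinarith [sq_nonneg (q * (3 * p - q) * u - p * (3 * q - p) * v)]

lemma quad_div_sq_add_eq_of_mul_eq (hpq : 6 * p * q - p ^ 2 - q ^ 2 ≠ 0) (huv : u + v ≠ 0)
    (h : q * (3 * p - q) * u = p * (3 * q - p) * v) :
    (q ^ 2 * u ^ 2 + 6 * p * q * u * v + p ^ 2 * v ^ 2) / (u + v) ^ 2 =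
      8 * p ^ 2 * q ^ 2 / (6 * p * q - p ^ 2 - q ^ 2) := by
  rw [div_eq_div_iff (pow_ne_zero 2 huv) hpq]
  linear_combination (p * (3 * q - p) * v - q * (3 * p - q) * u) * h

end QuadraticRatio

theorem stmt_12 (a₀ a₁ b₀ b₁ R₀ R₁ : ℝ)
    (ha₀ : 0 < a₀) (ha₁ : 0 < a₁) (hb₀ : 0 < b₀) (hb₁ : 0 < b₁)
    (hR₀ : R₀ = a₀ / b₀ ^ 2) (hR₁ : R₁ = a₁ / b₁ ^ 2)
    (h1 : R₁ / 9 < R₀) (h2 : R₀ < 9 * R₁)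
    (G : ℝ → ℝ)
    (hG : ∀ x, G x = (a₁ * x ^ 2 + 6 * Real.sqrt (a₀ * a₁) * x + a₀) /
        (b₁ ^ 2 * x ^ 2 + 2 * b₀ * b₁ * x + b₀ ^ 2)) :
    (∀ x, 0 ≤ x → G x ≤ F R₀ R₁) ∧
      G (Real.sqrt a₀ / Real.sqrt a₁ *
          ((3 * Real.sqrt R₁ - Real.sqrt R₀) / (3 * Real.sqrt R₀ - Real.sqrt R₁))) =
        F R₀ R₁ := by
  obtain ⟨p, hp, rfl⟩ : ∃ p, 0 < p ∧ R₀ = p ^ 2 :=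
    ⟨_, Real.sqrt_pos.2 (hR₀ ▸ by positivity), (Real.sq_sqrt (hR₀ ▸ by positivity)).symm⟩
  obtain ⟨q, hq, rfl⟩ : ∃ q, 0 < q ∧ R₁ = q ^ 2 :=
    ⟨_, Real.sqrt_pos.2 (hR₁ ▸ by positivity), (Real.sq_sqrt (hR₁ ▸ by positivity)).symm⟩
  obtain rfl : a₀ = (p * b₀) ^ 2 := by rw [mul_pow, hR₀]; field_simp
  obtain rfl : a₁ = (q * b₁) ^ 2 := by rw [mul_pow, hR₁]; field_simp
  have hqp : 0 < 3 * p - q := by nlinarith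
  have hpq : 0 < 3 * q - p := by nlinarith
  have hM : 0 < 6 * p * q - p ^ 2 - q ^ 2 := by nlinarith
  have hG' : ∀ x, G x = (q ^ 2 * (b₁ * x) ^ 2 + 6 * p * q * (b₁ * x) * b₀ + p ^ 2 * b₀ ^ 2) /
      (b₁ * x + b₀) ^ 2 := by
    intro x
    rw [hG, ← mul_pow (p * b₀), Real.sqrt_sq (by positivity)]
    ring
  rw [F_sq_sq hp.le hq.le, Real.sqrt_sq hp.le, Real.sqrt_sq hq.le,
    Real.sqrt_sq (by positivity), Real.sqrt_sq (by positivity)]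
  refine ⟨fun x hx => hG' x ▸ quad_div_sq_add_le hM (by positivity), ?_⟩
  rw [hG']
  refine quad_div_sq_add_eq_of_mul_eq hM.ne' (by positivity) ?_
  field_simp
end
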